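/- For a central essential arrangement A of n hyperplanes in ℂ^ℓ, the critical set Σ(A) = {(x, λ) ∈ M × ℂ^n : ω_λ(x) = 0} is, under the projection to M, a vector subbundle of the trivial bundle M × ℂ^n of rank n − ℓ, where M is the complement of the arrangement. -/

import Mathlib

noncomputable section

variable (ℓ n : ℕ)

/-- The linear map `λ ↦ ω_λ(x) = Σᵢ (λᵢ / fᵢ(x)) • fᵢ` with values in the dual. -/
def omegaAt (f : Fin n → ((Fin ℓ → ℂ) →ₗ[ℂ] ℂ)) (x : Fin ℓ → ℂ) :
    (Fin n → ℂ) →ₗ[ℂ] ((Fin ℓ → ℂ) →ₗ[ℂ] ℂ) :=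
  ∑ i : Fin n, (f i x)⁻¹ • ((LinearMap.proj i : (Fin n → ℂ) →ₗ[ℂ] ℂ).smulRight (f i))

/-- Fiber of the critical set `Σ(A)` over `x`. -/
def criticalFiber (f : Fin n → ((Fin ℓ → ℂ) →ₗ[ℂ] ℂ)) (x : Fin ℓ → ℂ) :
    Submodule ℂ (Fin n → ℂ) :=
  LinearMap.ker (omegaAt ℓ n f x)

/-! The form `ω_λ(x)` vanishes exactly when `(λᵢ / fᵢ(x))ᵢ` is a linear relation among the `fᵢ`.
Hence `Σ(A)ₓ` is the image of the space `R` of such relations, which does not depend on `x`, under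
the invertible diagonal map `μ ↦ (fᵢ(x) μᵢ)ᵢ`. Rescaling a basis of `R` by the functions `fᵢ`
gives a frame of `Σ(A)` that is continuous on all of `M`, and `dim R = n − ℓ` because the `fᵢ`
span the `ℓ`-dimensional dual space. -/

open Module Submodule LinearMap

theorem ker_comp_mulLeft_inv {ι K M : Type*} [Field K] [AddCommGroup M] [Module K M]
    (L : (ι → K) →ₗ[K] M) {c : ι → K} (hc : ∀ i, c i ≠ 0) :
    ker (L ∘ₗ mulLeft K c⁻¹) = (ker L).map (mulLeft K c) := by
  let u : (ι → K)ˣ := MulEquiv.piUnits.symm fun i => Units.mk0 (c i) (hc i)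
  have hu : (u : ι → K) = c := rfl
  have hu' : ((u⁻¹ : (ι → K)ˣ) : ι → K) = c⁻¹ := rfl
  rw [ker_comp, ← hu', ← hu, ← Units.toLinearMap_mulLeftLinearEquiv,
    ← Units.toLinearMap_mulLeftLinearEquiv, comap_equiv_eq_map_symm, Units.symm_mulLeftLinearEquiv,
    inv_inv]

theorem mulLeft_injective_of_ne_zero {ι K : Type*} [CommRing K] [IsDomain K] {c : ι → K}
    (hc : ∀ i, c i ≠ 0) :
    Function.Injective (mulLeft K c) := fun _ _ h =>
  funext fun i => mul_left_cancel₀ (hc i) (congrFun h i)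

theorem finrank_ker_linearCombination {ι K V : Type*} [Fintype ι] [DivisionRing K]
    [AddCommGroup V] [Module K V] {v : ι → V} (hv : span K (Set.range v) = ⊤) :
    finrank K (ker (Fintype.linearCombination K v)) = Fintype.card ι - finrank K V := by
  have h := finrank_range_add_finrank_ker (Fintype.linearCombination K v)
  rw [Fintype.range_linearCombination, hv, finrank_top, finrank_pi] at h
  omega

theorem linearIndependent_and_span_eq_map_of_basis {ι R V W : Type*} [Ring R]
    [AddCommGroup V] [Module R V] [AddCommGroup W] [Module R W] {p : Submodule R V}
    (b : Basis ι R p) {e : V →ₗ[R] W} (he : Function.Injective e) :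
    LinearIndependent R (fun j => e (b j)) ∧
      span R (Set.range fun j => e (b j)) = p.map e := by
  have hker : ker (e ∘ₗ p.subtype) = ⊥ := ker_eq_bot.2 (he.comp Subtype.val_injective)
  refine ⟨b.linearIndependent.map' _ hker, ?_⟩
  change span R (Set.range ((e ∘ₗ p.subtype) ∘ b)) = _
  rw [Set.range_comp, ← Submodule.map_span, b.span_eq, map_comp, map_subtype_top]

theorem omegaAt_eq_linearCombination_comp_mulLeft (f : Fin n → ((Fin ℓ → ℂ) →ₗ[ℂ] ℂ))
    (x : Fin ℓ → ℂ) :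
    omegaAt ℓ n f x = Fintype.linearCombination ℂ f ∘ₗ mulLeft ℂ (fun i => f i x)⁻¹ := by
  refine LinearMap.ext fun lam => LinearMap.ext fun v => ?_
  simp [omegaAt, Fintype.linearCombination_apply, mul_assoc]

theorem criticalFiber_eq_map_mulLeft (f : Fin n → ((Fin ℓ → ℂ) →ₗ[ℂ] ℂ)) {x : Fin ℓ → ℂ}
    (hx : ∀ i, f i x ≠ 0) :
    criticalFiber ℓ n f x =
      (ker (Fintype.linearCombination ℂ f)).map (mulLeft ℂ fun i => f i x) := by
  rw [criticalFiber, omegaAt_eq_linearCombination_comp_mulLeft, ker_comp_mulLeft_inv _ hx]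

theorem critical_set_is_vector_bundle (f : Fin n → ((Fin ℓ → ℂ) →ₗ[ℂ] ℂ))
    (hess : Submodule.span ℂ (Set.range f) = ⊤) :
    (∀ x : Fin ℓ → ℂ, (∀ i, f i x ≠ 0) →
        Module.finrank ℂ (criticalFiber ℓ n f x) = n - ℓ) ∧
      (∀ x₀ : Fin ℓ → ℂ, (∀ i, f i x₀ ≠ 0) →
        ∃ U : Set (Fin ℓ → ℂ), IsOpen U ∧ x₀ ∈ U ∧
          (∀ x ∈ U, ∀ i, f i x ≠ 0) ∧
          ∃ s : Fin (n - ℓ) → (Fin ℓ → ℂ) → (Fin n → ℂ),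
            (∀ j, ContinuousOn (s j) U) ∧
            ∀ x ∈ U, LinearIndependent ℂ (fun j => s j x) ∧
              criticalFiber ℓ n f x =
                Submodule.span ℂ (Set.range fun j => s j x)) := by
  have hf : ∀ i, Continuous (f i) := fun i => (f i).continuous_of_finiteDimensional
  have hrank : finrank ℂ (ker (Fintype.linearCombination ℂ f)) = n - ℓ := by
    simp [finrank_ker_linearCombination hess]
  let b := finBasisOfFinrankEq ℂ _ hrank
  let s : Fin (n - ℓ) → (Fin ℓ → ℂ) → (Fin n → ℂ) := fun j x => (fun i => f i x) * b j
  have frame : ∀ x, (∀ i, f i x ≠ 0) → LinearIndependent ℂ (fun j => s j x) ∧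
      criticalFiber ℓ n f x = span ℂ (Set.range fun j => s j x) := by
    intro x hx
    obtain ⟨hind, hspan⟩ :=
      linearIndependent_and_span_eq_map_of_basis b (mulLeft_injective_of_ne_zero hx)
    exact ⟨hind, by rw [criticalFiber_eq_map_mulLeft ℓ n f hx, ← hspan]; rfl⟩
  refine ⟨fun x hx => ?_, fun x₀ hx₀ => ⟨{x | ∀ i, f i x ≠ 0}, ?_, hx₀, fun x hx => hx, s,
    fun j => ?_, frame⟩⟩
  · rw [(frame x hx).2, finrank_span_eq_card (frame x hx).1, Fintype.card_fin]
  · simp only [Set.ofPred_forall]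
    exact isOpen_iInter_of_finite fun i => isOpen_ne_fun (hf i) continuous_const
  · exact ((continuous_pi hf).mul continuous_const).continuousOn
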